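/- arXiv:0801.3365 — 2 statements merged into one kernel-verified Lean document; each statement's English description precedes it below -/
import Mathlib

section
/- Localization of the fundamental group: let z be a 1-cocycle of a poset K of diamonds of a globally hyperbolic spacetime with values in an observable net R satisfying Haag duality, such that z(b) ∈ R(|b|) for every 1-simplex b. Then for any loop ℓ based at a 0-simplex a, z(ℓ) ∈ R(a). Consequently the von Neumann algebra generated by {z(ℓ) : ℓ a loop at a} is contained in R(a). -/
/-- A 1-simplex of a poset `K`: two faces and a support dominating both. -/
structure OneSimplex (K : Type*) [PartialOrder K] where
  face0 : K
  face1 : K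
  supp : K
  le0 : face0 ≤ supp
  le1 : face1 ≤ supp

/-- The reverse of a 1-simplex: same support, exchanged faces. -/
def OneSimplex.rev {K : Type*} [PartialOrder K] (b : OneSimplex K) : OneSimplex K :=
  ⟨b.face1, b.face0, b.supp, b.le1, b.le0⟩

/-- The degenerate 1-simplex `σ₀ a` at a 0-simplex `a`. -/
def OneSimplex.degenerate {K : Type*} [PartialOrder K] (a : K) : OneSimplex K :=
  ⟨a, a, a, le_refl a, le_refl a⟩

/-- A 2-simplex of a poset `K`, presented by its three vertices, the supports of its
three faces, and its own support, with all required order relations. Its faces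
`∂₀c, ∂₁c, ∂₂c` satisfy the simplicial identities by construction. -/
structure TwoSimplex (K : Type*) [PartialOrder K] where
  vstart : K
  vmid : K
  vend : K
  s0 : K
  s1 : K
  s2 : K
  supp : K
  hs0 : s0 ≤ supp
  hs1 : s1 ≤ supp
  hs2 : s2 ≤ supp
  h0s : vmid ≤ s0
  h0e : vend ≤ s0
  h1s : vstart ≤ s1
  h1e : vend ≤ s1
  h2s : vstart ≤ s2
  h2e : vmid ≤ s2

/-- The face `∂₀c` (from `vmid` to `vend`). -/
def TwoSimplex.face0 {K : Type*} [PartialOrder K] (c : TwoSimplex K) : OneSimplex K :=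
  ⟨c.vend, c.vmid, c.s0, c.h0e, c.h0s⟩

/-- The face `∂₁c` (from `vstart` to `vend`). -/
def TwoSimplex.face1 {K : Type*} [PartialOrder K] (c : TwoSimplex K) : OneSimplex K :=
  ⟨c.vend, c.vstart, c.s1, c.h1e, c.h1s⟩

/-- The face `∂₂c` (from `vstart` to `vmid`). -/
def TwoSimplex.face2 {K : Type*} [PartialOrder K] (c : TwoSimplex K) : OneSimplex K :=
  ⟨c.vmid, c.vstart, c.s2, c.h2e, c.h2s⟩

/-- A path in the poset `K` from `x` to `y`: a nonempty composable string of
1-simplices, `∂₁` of the first being `x` and `∂₀` of the last being `y`. -/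
inductive PPath (K : Type*) [PartialOrder K] : K → K → Type _
  | single (b : OneSimplex K) : PPath K b.face1 b.face0
  | cons (b : OneSimplex K) {x : K} (p : PPath K x b.face1) : PPath K x b.face0

/-- Composition of paths: `q.comp p` first traverses `p`, then `q`. -/
def PPath.comp {K : Type*} [PartialOrder K] : ∀ {x y w : K}, PPath K y w → PPath K x y → PPath K x w
  | _, _, _, .single b, p => .cons b p
  | _, _, _, .cons b q, p => .cons b (q.comp p)

/-- The reverse of a path. -/
def PPath.rev {K : Type*} [PartialOrder K] : ∀ {x y : K}, PPath K x y → PPath K y x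
  | _, _, .single b => .single b.rev
  | _, _, .cons b p => PPath.comp p.rev (.single b.rev)

/-- Multiplicative extension of a function on 1-simplices to paths:
`z(bₙ * ⋯ * b₁) = z(bₙ) ⋯ z(b₁)`. -/
def PPath.eval {K : Type*} [PartialOrder K] {M : Type*} [Monoid M]
    (z : OneSimplex K → M) : ∀ {x y : K}, PPath K x y → M
  | _, _, .single b => z b
  | _, _, .cons b p => z b * p.eval z

/-- The support of the path is causally disjoint from `o` (every 1-simplex of the path
has support `⊥ o`). -/
def PPath.suppDisjoint {K : Type*} [PartialOrder K] (perp : K → K → Prop) (o : K) :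
    ∀ {x y : K}, PPath K x y → Prop
  | _, _, .single b => perp b.supp o
  | _, _, .cons b p => perp b.supp o ∧ p.suppDisjoint perp o

/-- Homotopy of paths with the same endpoints: the equivalence relation generated by
elementary deformations (replacing `∂₁c` by `∂₀c * ∂₂c` for a 2-simplex `c`), compatible
with composition. -/
inductive PHomotopic {K : Type*} [PartialOrder K] : ∀ {x y : K}, PPath K x y → PPath K x y → Prop
  | refl {x y : K} (p : PPath K x y) : PHomotopic p p
  | symm {x y : K} {p q : PPath K x y} : PHomotopic p q → PHomotopic q p
  | trans {x y : K} {p q r : PPath K x y} : PHomotopic p q → PHomotopic q r → PHomotopic p r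
  | deform (c : TwoSimplex K) :
      PHomotopic (.single c.face1) ((PPath.single c.face0).comp (.single c.face2))
  | comp_congr {x y w : K} {q q' : PPath K y w} {p p' : PPath K x y} :
      PHomotopic q q' → PHomotopic p p' → PHomotopic (q.comp p) (q'.comp p')


/-! By Haag duality, `z(ℓ) ∈ R(a)` as soon as `z(ℓ)` commutes with `R(o)` for every `o ⊥ a`.
The cocycle identity makes `z` constant on homotopy classes, so `ℓ` may be replaced by a homotopic
loop whose 1-simplices `b` all have `|b| ⊥ o`. Each factor `z(b) ∈ R(|b|)` then lies in `R(o)'`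
by locality, the easy half of Haag duality, and hence so does their product `z(ℓ)`. -/

namespace PPath

variable {K : Type*} [PartialOrder K] {M : Type*} [Monoid M]

theorem eval_comp (z : OneSimplex K → M) :
    ∀ {x y w : K} (q : PPath K y w) (p : PPath K x y),
      (q.comp p).eval z = q.eval z * p.eval z
  | _, _, _, .single _, _ => rfl
  | _, _, _, .cons b q, p => by
      change z b * (q.comp p).eval z = z b * q.eval z * p.eval z
      rw [eval_comp z q p, mul_assoc]

theorem eval_eq_of_homotopic {z : OneSimplex K → M}
    (hz : ∀ c : TwoSimplex K, z c.face0 * z c.face2 = z c.face1)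
    {x y : K} {p q : PPath K x y} (h : PHomotopic p q) : p.eval z = q.eval z := by
  induction h with
  | refl => rfl
  | symm _ ih => exact ih.symm
  | trans _ _ ih₁ ih₂ => exact ih₁.trans ih₂
  | deform c => exact (hz c).symm
  | comp_congr _ _ ih₁ ih₂ => rw [eval_comp, eval_comp, ih₁, ih₂]

theorem eval_mem_of_suppDisjoint {S : Type*} [SetLike S M] [MulMemClass S M] {s : S}
    {perp : K → K → Prop} {o : K} {z : OneSimplex K → M}
    (hz : ∀ b : OneSimplex K, perp b.supp o → z b ∈ s) :
    ∀ {x y : K} (p : PPath K x y), p.suppDisjoint perp o → p.eval z ∈ s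
  | _, _, .single b, hb => hz b hb
  | _, _, .cons b p, hbp => mul_mem (hz b hbp.1) (eval_mem_of_suppDisjoint hz p hbp.2)

end PPath

theorem VonNeumannAlgebra.centralizer_centralizer_subset
    {H : Type*} [NormedAddCommGroup H] [InnerProductSpace ℂ H] [CompleteSpace H]
    {S : VonNeumannAlgebra H} {s : Set (H →L[ℂ] H)} (h : s ⊆ S) :
    s.centralizer.centralizer ⊆ S :=
  S.centralizer_centralizer ▸ Set.centralizer_subset (Set.centralizer_subset h)

section HaagDuality

variable {K : Type*} {H : Type*} [NormedAddCommGroup H] [InnerProductSpace ℂ H] [CompleteSpace H]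
  {perp : K → K → Prop} {R : K → VonNeumannAlgebra H}

theorem mem_commutant_of_haag
    (hhaag : ∀ a : K, (R a : Set (H →L[ℂ] H)) =
        ⋂ (b : K), ⋂ (_ : perp b a), ((R b).commutant : Set (H →L[ℂ] H)))
    {a o : K} (hoa : perp o a) {T : H →L[ℂ] H} (hT : T ∈ R a) : T ∈ (R o).commutant := by
  rw [← SetLike.mem_coe, hhaag a] at hT
  exact Set.mem_iInter₂.mp hT o hoa

variable [PartialOrder K]

theorem eval_loop_mem_of_haag (hsymm : ∀ x y : K, perp x y → perp y x)
    (hhaag : ∀ a : K, (R a : Set (H →L[ℂ] H)) =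
        ⋂ (b : K), ⋂ (_ : perp b a), ((R b).commutant : Set (H →L[ℂ] H)))
    (hdef : ∀ (a o : K), perp a o → ∀ ℓ : PPath K a a,
        ∃ ℓ' : PPath K a a, PHomotopic ℓ ℓ' ∧ ℓ'.suppDisjoint perp o)
    {z : OneSimplex K → (H →L[ℂ] H)}
    (hzc : ∀ c : TwoSimplex K, z c.face0 * z c.face2 = z c.face1)
    (hloc : ∀ b : OneSimplex K, z b ∈ R b.supp) {a : K} (ℓ : PPath K a a) :
    ℓ.eval z ∈ R a := by
  rw [← SetLike.mem_coe, hhaag a]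
  refine Set.mem_iInter₂.mpr fun o hoa => ?_
  obtain ⟨ℓ', hℓℓ', hℓ'⟩ := hdef a o (hsymm _ _ hoa) ℓ
  rw [PPath.eval_eq_of_homotopic hzc hℓℓ']
  exact PPath.eval_mem_of_suppDisjoint
    (fun b hb => mem_commutant_of_haag hhaag (hsymm _ _ hb) (hloc b)) ℓ' hℓ'

end HaagDuality

theorem localization_of_fundamental_group_general {K : Type*} [PartialOrder K]
    {H : Type*} [NormedAddCommGroup H] [InnerProductSpace ℂ H] [CompleteSpace H]
    (perp : K → K → Prop)
    (hsymm : ∀ x y : K, perp x y → perp y x)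
    (R : K → VonNeumannAlgebra H)
    (hhaag : ∀ a : K, (R a : Set (H →L[ℂ] H)) =
        ⋂ (b : K), ⋂ (_ : perp b a), ((R b).commutant : Set (H →L[ℂ] H)))
    (hdef : ∀ (a o : K), perp a o → ∀ ℓ : PPath K a a,
        ∃ ℓ' : PPath K a a, PHomotopic ℓ ℓ' ∧ ℓ'.suppDisjoint perp o)
    (z : OneSimplex K → (H →L[ℂ] H))
    (hzc : ∀ c : TwoSimplex K, z c.face0 * z c.face2 = z c.face1)
    (hloc : ∀ b : OneSimplex K, z b ∈ R b.supp) :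
    ∀ a : K,
      (∀ ℓ : PPath K a a, ℓ.eval z ∈ R a) ∧
      Set.centralizer (Set.centralizer
          {T : H →L[ℂ] H | ∃ ℓ : PPath K a a, ℓ.eval z = T}) ⊆
        (R a : Set (H →L[ℂ] H)) := by
  intro a
  have hloops : ∀ ℓ : PPath K a a, ℓ.eval z ∈ R a :=
    eval_loop_mem_of_haag hsymm hhaag hdef hzc hloc
  refine ⟨hloops, VonNeumannAlgebra.centralizer_centralizer_subset ?_⟩
  rintro _ ⟨ℓ, rfl⟩
  exact hloops ℓ

theorem localization_of_fundamental_group {K : Type*} [PartialOrder K]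
    {H : Type*} [NormedAddCommGroup H] [InnerProductSpace ℂ H] [CompleteSpace H]
    (perp : K → K → Prop)
    (hsymm : ∀ x y : K, perp x y → perp y x)
    (R : K → VonNeumannAlgebra H)
    (hiso : ∀ ⦃a b : K⦄, a ≤ b → (R a : Set (H →L[ℂ] H)) ⊆ (R b : Set (H →L[ℂ] H)))
    (hhaag : ∀ a : K, (R a : Set (H →L[ℂ] H)) =
        ⋂ (b : K), ⋂ (_ : perp b a), ((R b).commutant : Set (H →L[ℂ] H)))
    (hccconn : ∀ (o x y : K), perp x o → perp y o →
        ∃ q : PPath K x y, q.suppDisjoint perp o)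
    (hdef : ∀ (a o : K), perp a o → ∀ ℓ : PPath K a a,
        ∃ ℓ' : PPath K a a, PHomotopic ℓ ℓ' ∧ ℓ'.suppDisjoint perp o)
    (z : OneSimplex K → (H →L[ℂ] H))
    (hzu : ∀ b : OneSimplex K, z b ∈ unitary (H →L[ℂ] H))
    (hzc : ∀ c : TwoSimplex K, z c.face0 * z c.face2 = z c.face1)
    (hloc : ∀ b : OneSimplex K, z b ∈ R b.supp) :
    ∀ a : K,
      (∀ ℓ : PPath K a a, ℓ.eval z ∈ R a) ∧
      Set.centralizer (Set.centralizer
          {T : H →L[ℂ] H | ∃ ℓ : PPath K a a, ℓ.eval z = T}) ⊆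
        (R a : Set (H →L[ℂ] H)) :=
  localization_of_fundamental_group_general perp hsymm R hhaag hdef z hzc hloc
end

section
/- Independence of the charge component from the path-frame: if P_o and Q_o are two path-frames with the same pole o, then the corresponding charge components ẑ_P and ẑ_Q of a locally-valued 1-cocycle z are equivalent via the intertwiner s_a := z(q_{(a,o)} * p̄_{(a,o)}), i.e. s_{∂₀b} ẑ_P(b) = ẑ_Q(b) s_{∂₁b} for every 1-simplex b; moreover each s_a lies in R(a) by localization of the fundamental group. -/
/-- The charge component of a 1-cocycle with respect to a path-frame `P` with pole `o`:
`ẑ(b) := z(p_{(∂₀b,o)} * p̄_{(∂₁b,o)})`. -/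
def chargeComp {K : Type*} [PartialOrder K] {M : Type*} [Monoid M] {o : K}
    (P : ∀ a : K, PPath K o a) (z : OneSimplex K → M) (b : OneSimplex K) : M :=
  ((P b.face0).comp (P b.face1).rev).eval z

/- The cocycle identity makes the value of `z` on a path invariant under elementary
deformations and, since `z` is unitary, forces `z(σ₀ a) = 1` and `z(b̄) z(b) = 1`. Hence `s_a`
telescopes against the charge components, which gives the intertwining relation. Moreover `s_a`
is the value of `z` on a loop at `a`; for `b ⊥ a` that loop deforms into one supported away from
`b`, where `z` takes values in `R(b)'`, so `s_a ∈ ⋂_{b ⊥ a} R(b)' = R(a)` by Haag duality. -/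

def IsOneCocycle {K : Type*} [PartialOrder K] {M : Type*} [Monoid M]
    (z : OneSimplex K → M) : Prop :=
  ∀ c : TwoSimplex K, z c.face0 * z c.face2 = z c.face1

section Cocycle

variable {K : Type*} [PartialOrder K] {M : Type*} [Monoid M] {z : OneSimplex K → M}

theorem PPath.eval_comp_s14 (z : OneSimplex K → M) :
    ∀ {x y w : K} (q : PPath K y w) (p : PPath K x y),
      (q.comp p).eval z = q.eval z * p.eval z
  | _, _, _, .single _, _ => rfl
  | _, _, _, .cons b q, p => by
      rw [PPath.comp, PPath.eval, PPath.eval, PPath.eval_comp_s14 z q p, mul_assoc]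

theorem PHomotopic.eval_eq (hz : IsOneCocycle z) {x y : K} {p q : PPath K x y}
    (h : PHomotopic p q) : p.eval z = q.eval z := by
  induction h with
  | refl => rfl
  | symm _ ih => exact ih.symm
  | trans _ _ ih₁ ih₂ => exact ih₁.trans ih₂
  | deform c => exact (hz c).symm
  | comp_congr _ _ ih₁ ih₂ => rw [PPath.eval_comp_s14, PPath.eval_comp_s14, ih₁, ih₂]

theorem IsOneCocycle.apply_degenerate (hz : IsOneCocycle z) {a : K}
    (hu : IsUnit (z (OneSimplex.degenerate a))) : z (OneSimplex.degenerate a) = 1 :=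
  hu.mul_eq_left.mp <| hz ⟨a, a, a, a, a, a, a, le_rfl, le_rfl, le_rfl, le_rfl, le_rfl, le_rfl,
    le_rfl, le_rfl, le_rfl⟩

theorem IsOneCocycle.apply_rev_mul (hz : IsOneCocycle z) (b : OneSimplex K)
    (hu : IsUnit (z (OneSimplex.degenerate b.face1))) : z b.rev * z b = 1 :=
  -- the 2-simplex `∂₁b → ∂₀b → ∂₁b` has faces `b̄`, `σ₀ ∂₁b`, `b`
  calc z b.rev * z b = z (OneSimplex.degenerate b.face1) :=
        hz ⟨b.face1, b.face0, b.face1, b.supp, b.face1, b.supp, b.supp, le_rfl, b.le1, le_rfl,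
          b.le0, b.le1, le_rfl, le_rfl, b.le1, b.le0⟩
    _ = 1 := hz.apply_degenerate hu

theorem IsOneCocycle.eval_rev_mul (hz : IsOneCocycle z)
    (hu : ∀ a : K, IsUnit (z (OneSimplex.degenerate a))) :
    ∀ {x y : K} (p : PPath K x y), p.rev.eval z * p.eval z = 1
  | _, _, .single b => hz.apply_rev_mul b (hu _)
  | _, _, .cons b p =>
      calc (PPath.cons b p).rev.eval z * (PPath.cons b p).eval z
          = p.rev.eval z * z b.rev * (z b * p.eval z) :=
            congrArg (· * _) (PPath.eval_comp_s14 z p.rev (.single b.rev))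
        _ = p.rev.eval z * (z b.rev * z b) * p.eval z := by simp only [mul_assoc]
        _ = 1 := by rw [hz.apply_rev_mul b (hu _), mul_one, hz.eval_rev_mul hu p]

theorem PPath.eval_mem_of_suppDisjoint_s14 {S : Type*} [SetLike S M] [SubmonoidClass S M] {s : S}
    {perp : K → K → Prop} {o : K} (hs : ∀ b : OneSimplex K, perp b.supp o → z b ∈ s) :
    ∀ {x y : K} (p : PPath K x y), p.suppDisjoint perp o → p.eval z ∈ s
  | _, _, .single b, hb => hs b hb
  | _, _, .cons b p, hbp => mul_mem (hs b hbp.1) (p.eval_mem_of_suppDisjoint_s14 hs hbp.2)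

end Cocycle

section HaagDuality

variable {K : Type*} {H : Type*} [NormedAddCommGroup H] [InnerProductSpace ℂ H]
  [CompleteSpace H] {perp : K → K → Prop} {R : K → VonNeumannAlgebra H}

theorem mem_iff_forall_perp_mem_commutant
    (hhaag : ∀ a : K, (R a : Set (H →L[ℂ] H)) =
        ⋂ (b : K), ⋂ (_ : perp b a), ((R b).commutant : Set (H →L[ℂ] H)))
    {a : K} {x : H →L[ℂ] H} : x ∈ R a ↔ ∀ b : K, perp b a → x ∈ (R b).commutant := by
  rw [← SetLike.mem_coe, hhaag a]
  simp only [Set.mem_iInter, SetLike.mem_coe]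

theorem mem_commutant_of_perp (hsymm : ∀ x y : K, perp x y → perp y x)
    (hhaag : ∀ a : K, (R a : Set (H →L[ℂ] H)) =
        ⋂ (b : K), ⋂ (_ : perp b a), ((R b).commutant : Set (H →L[ℂ] H)))
    {a o : K} (hao : perp a o) {x : H →L[ℂ] H} (hx : x ∈ R a) : x ∈ (R o).commutant :=
  (mem_iff_forall_perp_mem_commutant hhaag).mp hx o (hsymm a o hao)

theorem PPath.eval_loop_mem [PartialOrder K] (hsymm : ∀ x y : K, perp x y → perp y x)
    (hhaag : ∀ a : K, (R a : Set (H →L[ℂ] H)) =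
        ⋂ (b : K), ⋂ (_ : perp b a), ((R b).commutant : Set (H →L[ℂ] H)))
    (hdef : ∀ (a o : K), perp a o → ∀ ℓ : PPath K a a,
        ∃ ℓ' : PPath K a a, PHomotopic ℓ ℓ' ∧ ℓ'.suppDisjoint perp o)
    {z : OneSimplex K → (H →L[ℂ] H)} (hz : IsOneCocycle z)
    (hloc : ∀ b : OneSimplex K, z b ∈ R b.supp) {a : K} (ℓ : PPath K a a) :
    ℓ.eval z ∈ R a := by
  refine (mem_iff_forall_perp_mem_commutant hhaag).mpr fun o hoa => ?_
  obtain ⟨ℓ', hℓ, hℓ'⟩ := hdef a o (hsymm o a hoa) ℓ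
  rw [hℓ.eval_eq hz]
  exact ℓ'.eval_mem_of_suppDisjoint_s14 (fun b hb => mem_commutant_of_perp hsymm hhaag hb (hloc b)) hℓ'

end HaagDuality

theorem charge_component_frame_independent_general {K : Type*} [PartialOrder K]
    {H : Type*} [NormedAddCommGroup H] [InnerProductSpace ℂ H] [CompleteSpace H]
    (perp : K → K → Prop)
    (hsymm : ∀ x y : K, perp x y → perp y x)
    (R : K → VonNeumannAlgebra H)
    (hhaag : ∀ a : K, (R a : Set (H →L[ℂ] H)) =
        ⋂ (b : K), ⋂ (_ : perp b a), ((R b).commutant : Set (H →L[ℂ] H)))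
    (hdef : ∀ (a o : K), perp a o → ∀ ℓ : PPath K a a,
        ∃ ℓ' : PPath K a a, PHomotopic ℓ ℓ' ∧ ℓ'.suppDisjoint perp o)
    (o : K) (P Q : ∀ a : K, PPath K o a)
    (z : OneSimplex K → (H →L[ℂ] H))
    (hzu : ∀ b : OneSimplex K, z b ∈ unitary (H →L[ℂ] H))
    (hzc : ∀ c : TwoSimplex K, z c.face0 * z c.face2 = z c.face1)
    (hloc : ∀ b : OneSimplex K, z b ∈ R b.supp) :
    (∀ b : OneSimplex K,
        ((Q b.face0).comp (P b.face0).rev).eval z * chargeComp P z b =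
          chargeComp Q z b * ((Q b.face1).comp (P b.face1).rev).eval z) ∧
    (∀ a : K, ((Q a).comp (P a).rev).eval z ∈ R a) := by
  have hz : IsOneCocycle z := hzc
  have hu : ∀ a : K, IsUnit (z (OneSimplex.degenerate a)) := fun a =>
    Unitary.isUnit_coe (U := ⟨_, hzu (OneSimplex.degenerate a)⟩)
  refine ⟨fun b => ?_, fun a => PPath.eval_loop_mem hsymm hhaag hdef hz hloc _⟩
  simp only [chargeComp, PPath.eval_comp_s14]
  rw [mul_assoc, ← mul_assoc ((P b.face0).rev.eval z), hz.eval_rev_mul hu, one_mul,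
    mul_assoc, ← mul_assoc ((Q b.face1).rev.eval z), hz.eval_rev_mul hu, one_mul]

theorem charge_component_frame_independent {K : Type*} [PartialOrder K]
    {H : Type*} [NormedAddCommGroup H] [InnerProductSpace ℂ H] [CompleteSpace H]
    (perp : K → K → Prop)
    (hsymm : ∀ x y : K, perp x y → perp y x)
    (R : K → VonNeumannAlgebra H)
    (hiso : ∀ ⦃a b : K⦄, a ≤ b → (R a : Set (H →L[ℂ] H)) ⊆ (R b : Set (H →L[ℂ] H)))
    (hhaag : ∀ a : K, (R a : Set (H →L[ℂ] H)) =
        ⋂ (b : K), ⋂ (_ : perp b a), ((R b).commutant : Set (H →L[ℂ] H)))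
    (hccconn : ∀ (o x y : K), perp x o → perp y o →
        ∃ q : PPath K x y, q.suppDisjoint perp o)
    (hdef : ∀ (a o : K), perp a o → ∀ ℓ : PPath K a a,
        ∃ ℓ' : PPath K a a, PHomotopic ℓ ℓ' ∧ ℓ'.suppDisjoint perp o)
    (o : K) (P Q : ∀ a : K, PPath K o a)
    (hP : PHomotopic (P o) (PPath.single (OneSimplex.degenerate o)))
    (hQ : PHomotopic (Q o) (PPath.single (OneSimplex.degenerate o)))
    (z : OneSimplex K → (H →L[ℂ] H))
    (hzu : ∀ b : OneSimplex K, z b ∈ unitary (H →L[ℂ] H))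
    (hzc : ∀ c : TwoSimplex K, z c.face0 * z c.face2 = z c.face1)
    (hloc : ∀ b : OneSimplex K, z b ∈ R b.supp) :
    (∀ b : OneSimplex K,
        ((Q b.face0).comp (P b.face0).rev).eval z * chargeComp P z b =
          chargeComp Q z b * ((Q b.face1).comp (P b.face1).rev).eval z) ∧
    (∀ a : K, ((Q a).comp (P a).rev).eval z ∈ R a) :=
  charge_component_frame_independent_general perp hsymm R hhaag hdef o P Q z hzu hzc hloc
end
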